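/- Let n ≥ 1, τ > 0, A, B, H(λ,K), L, and the closed-loop system be as in the context. Consensus is reached asymptotically if and only if for every i = 2,…,N, every complex root z of the polynomial R_i(z,K) := (z − 1)^n + λ_i Σ_{p=1}^{n} τ^p K_{n+1−p} (z − 1)^{n−p} satisfies |z| < 1. -/

import Mathlib

/-!
Write `L = V diag(λ) Vᵀ` with `V` orthogonal. The change of variables `x = (V ⊗ I) y` turns the
closed loop into the decoupled modes `y_c(k+1) = H(λ_c, K) y_c(k)`. Since `L 𝟙 = 0` and `λ_c > 0`
for `c ≠ 1`, the first column of `V` is constant and no other column is, so consensus holds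
exactly when `H(λ_c, K)^k → 0` for every `c ≠ 1`. By Gelfand's formula this means that every
eigenvalue of `H(λ_c, K)` lies in the open unit disc. Finally, the shift structure of
`H(λ_c, K)` forces its eigenvectors for the eigenvalue `z` to be multiples of
`((z - 1)^j τ^(n-1-j))_j`, and the last row then reads `R_c(z, K) = 0`.
-/

open Matrix Kronecker Filter

/-- The n×n system matrix `A`: ones on the diagonal, `τ` on the superdiagonal. -/
noncomputable def Amat (n : ℕ) (τ : ℝ) : Matrix (Fin n) (Fin n) ℝ :=
  Matrix.of fun i j => if (j : ℕ) = (i : ℕ) then 1 else if (j : ℕ) = (i : ℕ) + 1 then τ else 0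

/-- The n×1 input matrix `B`: last entry `τ`, all other entries `0`. -/
noncomputable def Bmat (n : ℕ) (τ : ℝ) : Matrix (Fin n) (Fin 1) ℝ :=
  Matrix.of fun i _ => if (i : ℕ) = n - 1 then τ else 0

open Topology

theorem tendsto_pow_atTop_nhds_zero_iff_spectrum_norm_lt_one {A : Type*} [NormedRing A]
    [NormedAlgebra ℂ A] [CompleteSpace A] [NormOneClass A] (a : A) :
    Tendsto (a ^ ·) atTop (𝓝 0) ↔ ∀ z ∈ spectrum ℂ a, ‖z‖ < 1 := by
  constructor
  · intro ha z hz
    have hnorm : Tendsto (fun k => ‖z‖ ^ k) atTop (𝓝 0) :=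
      squeeze_zero (fun _ => by positivity)
        (fun k => norm_pow z k ▸ spectrum.norm_le_norm_of_mem (spectrum.pow_mem_pow a k hz))
        (tendsto_zero_iff_norm_tendsto_zero.mp ha)
    simpa using tendsto_pow_atTop_nhds_zero_iff.mp hnorm
  · intro h
    have := NormOneClass.nontrivial (G := A)
    have hrad : spectralRadius ℂ a < 1 :=
      spectrum.spectralRadius_lt_of_forall_lt a fun z hz => by exact_mod_cast h z hz
    obtain ⟨r, hρr, hr1⟩ := ENNReal.lt_iff_exists_nnreal_btwn.mp hrad
    have hgelfand := spectrum.pow_nnnorm_pow_one_div_tendsto_nhds_spectralRadius a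
    have hbound : ∀ᶠ k : ℕ in atTop, ‖a ^ k‖ ≤ (r : ℝ) ^ k := by
      filter_upwards [hgelfand.eventually_lt_const hρr, eventually_ne_atTop 0] with k hk hk0
      have hk' : ‖a ^ k‖₊ < r ^ k := by
        have := ENNReal.rpow_lt_rpow hk (by positivity : (0 : ℝ) < k)
        rw [← ENNReal.rpow_mul, one_div_mul_cancel (by exact_mod_cast hk0), ENNReal.rpow_one,
          ENNReal.rpow_natCast] at this
        exact_mod_cast this
      exact_mod_cast hk'.le
    exact squeeze_zero_norm' hbound
      (tendsto_pow_atTop_nhds_zero_of_lt_one r.coe_nonneg (by exact_mod_cast hr1))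

namespace Matrix

variable {ι : Type*} [Fintype ι] [DecidableEq ι]

theorem tendsto_pow_atTop_nhds_zero_iff_spectrum_norm_lt_one (M : Matrix ι ι ℂ) :
    Tendsto (M ^ ·) atTop (𝓝 0) ↔ ∀ z ∈ spectrum ℂ M, ‖z‖ < 1 := by
  rcases isEmpty_or_nonempty ι with hι | hι
  · simp [spectrum.of_subsingleton, Subsingleton.elim _ (0 : Matrix ι ι ℂ)]
  · open scoped Matrix.Norms.Operator in
    exact _root_.tendsto_pow_atTop_nhds_zero_iff_spectrum_norm_lt_one M

theorem tendsto_pow_map_ofReal_iff (H : Matrix ι ι ℝ) :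
    Tendsto (H.map Complex.ofReal ^ ·) atTop (𝓝 0) ↔ Tendsto (H ^ ·) atTop (𝓝 0) := by
  have hpow (k : ℕ) : H.map Complex.ofReal ^ k = (H ^ k).map Complex.ofReal :=
    (Matrix.map_pow H Complex.ofRealHom k).symm
  simp only [hpow, Complex.isometry_ofReal.isUniformInducing.isInducing.matrix_map.tendsto_nhds_iff]
  simp [Function.comp_def]

theorem mem_spectrum_iff_exists_mulVec_eq_smul {𝕜 : Type*} [Field 𝕜] (M : Matrix ι ι 𝕜) (z : 𝕜) :
    z ∈ spectrum 𝕜 M ↔ ∃ v ≠ 0, M *ᵥ v = z • v := by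
  rw [spectrum.mem_iff, isUnit_iff_isUnit_det, isUnit_iff_ne_zero, not_not,
    ← exists_mulVec_eq_zero_iff]
  simp [Algebra.algebraMap_eq_smul_one, sub_mulVec, smul_mulVec, sub_eq_zero, eq_comm]

end Matrix

section Kronecker

variable {R ι κ : Type*} [CommRing R] [Fintype ι] [DecidableEq ι] [Fintype κ] [DecidableEq κ]

theorem one_kronecker_sub_diagonal_kronecker_pow (A G : Matrix κ κ R) (lam : ι → R) (k : ℕ) :
    ((1 : Matrix ι ι R) ⊗ₖ A - diagonal lam ⊗ₖ G) ^ k =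
      reindex (Equiv.prodComm _ _) (Equiv.prodComm _ _)
        (blockDiagonal fun c => (A - lam c • G) ^ k) := by
  have hblock : (1 : Matrix ι ι R) ⊗ₖ A - diagonal lam ⊗ₖ G =
      reindexAlgEquiv R R (Equiv.prodComm _ _) (blockDiagonal fun c => A - lam c • G) := by
    ext ⟨a, b⟩ ⟨c, d⟩
    by_cases h : a = c <;> simp [blockDiagonal_apply, one_apply, h]
  rw [hblock, ← map_pow, ← blockDiagonal_pow, coe_reindexAlgEquiv]
  rfl

theorem one_kronecker_sub_kronecker_pow_mul {V L : Matrix ι ι R} (hV : Vᵀ * V = 1) {lam : ι → R}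
    (hL : L = V * diagonal lam * Vᵀ) (A G : Matrix κ κ R) (k : ℕ) :
    ((1 : Matrix ι ι R) ⊗ₖ A - L ⊗ₖ G) ^ k * (V ⊗ₖ (1 : Matrix κ κ R)) =
      (V ⊗ₖ (1 : Matrix κ κ R)) * ((1 : Matrix ι ι R) ⊗ₖ A - diagonal lam ⊗ₖ G) ^ k := by
  refine (SemiconjBy.pow_right ?_ k).symm
  simp only [SemiconjBy, Matrix.mul_sub, Matrix.sub_mul, ← mul_kronecker_mul, hL,
    Matrix.mul_assoc, hV]
  simp

theorem one_kronecker_sub_kronecker_pow_mul_apply {V L : Matrix ι ι R} (hV : Vᵀ * V = 1)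
    {lam : ι → R} (hL : L = V * diagonal lam * Vᵀ) (A G : Matrix κ κ R) (k : ℕ) (i c : ι)
    (l m : κ) :
    (((1 : Matrix ι ι R) ⊗ₖ A - L ⊗ₖ G) ^ k * (V ⊗ₖ (1 : Matrix κ κ R))) (i, l) (c, m) =
      V i c * ((A - lam c • G) ^ k) l m := by
  rw [one_kronecker_sub_kronecker_pow_mul hV hL, one_kronecker_sub_diagonal_kronecker_pow]
  simp [mul_apply, Fintype.sum_prod_type, blockDiagonal_apply, one_apply]

end Kronecker

section Laplacian

variable {𝕜 ι : Type*} [Field 𝕜] [Fintype ι] [DecidableEq ι] {V L : Matrix ι ι 𝕜}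
  {lam : ι → 𝕜}

theorem Matrix.transpose_mulVec_one_apply_eq_zero (hV : Vᵀ * V = 1)
    (hL : L = V * diagonal lam * Vᵀ) (hL1 : L *ᵥ (fun _ => 1) = 0) {c : ι} (hc : lam c ≠ 0) :
    (Vᵀ *ᵥ fun _ => 1) c = 0 := by
  have h := congrArg (Vᵀ *ᵥ ·) hL1
  simp only [hL, mulVec_mulVec, ← Matrix.mul_assoc, hV, Matrix.one_mul, mulVec_zero] at h
  simpa [← mulVec_mulVec, mulVec_diagonal, hc] using congrFun h c

theorem Matrix.apply_eq_apply_of_mulVec_one_eq_zero (hV : Vᵀ * V = 1)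
    (hL : L = V * diagonal lam * Vᵀ) (hL1 : L *ᵥ (fun _ => 1) = 0) {c₀ : ι}
    (hlam : ∀ c ≠ c₀, lam c ≠ 0) (i j : ι) : V i c₀ = V j c₀ := by
  have hVw (i : ι) : V i c₀ * (Vᵀ *ᵥ fun _ => 1) c₀ = 1 := by
    have h : (V *ᵥ (Vᵀ *ᵥ fun _ => 1)) i = 1 := by
      rw [mulVec_mulVec, mul_eq_one_comm.mp hV, one_mulVec]
    change ∑ c, V i c * (Vᵀ *ᵥ fun _ => 1) c = 1 at h
    rwa [Finset.sum_eq_single c₀ (fun c _ hc => by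
      rw [transpose_mulVec_one_apply_eq_zero hV hL hL1 (hlam c hc), mul_zero]) (by simp)] at h
  exact mul_right_cancel₀ (right_ne_zero_of_mul_eq_one (hVw i)) ((hVw i).trans (hVw j).symm)

theorem Matrix.exists_apply_ne_of_mulVec_one_eq_zero [CharZero 𝕜] (hV : Vᵀ * V = 1)
    (hL : L = V * diagonal lam * Vᵀ) (hL1 : L *ᵥ (fun _ => 1) = 0) {c : ι} (hc : lam c ≠ 0) :
    ∃ a b, V a c ≠ V b c := by
  by_contra! hconst
  have hcc : V c c = 0 := by
    have h := transpose_mulVec_one_apply_eq_zero hV hL hL1 hc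
    simp only [mulVec, dotProduct, transpose_apply, mul_one, hconst _ c, Finset.sum_const,
      Finset.card_univ, nsmul_eq_mul, mul_eq_zero, Nat.cast_eq_zero] at h
    exact h.resolve_left (Fintype.card_pos_iff.mpr ⟨c⟩).ne'
  have h := congrFun (congrFun hV c) c
  simp [mul_apply, hconst _ c, hcc] at h

end Laplacian

theorem consensus_iff_tendsto_pow_zero {ι κ : Type*} [Fintype ι] [DecidableEq ι] [Fintype κ]
    [DecidableEq κ] {V L : Matrix ι ι ℝ} {lam : ι → ℝ} {c₀ : ι} (hV : Vᵀ * V = 1)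
    (hL : L = V * diagonal lam * Vᵀ) (hL1 : L *ᵥ (fun _ => 1) = 0) (hlam : ∀ c ≠ c₀, lam c ≠ 0)
    (A G : Matrix κ κ ℝ) :
    (∀ x : ι × κ → ℝ, ∀ i j l, Tendsto (fun k =>
        (((1 : Matrix ι ι ℝ) ⊗ₖ A - L ⊗ₖ G) ^ k *ᵥ x) (i, l) -
          (((1 : Matrix ι ι ℝ) ⊗ₖ A - L ⊗ₖ G) ^ k *ᵥ x) (j, l)) atTop (𝓝 0)) ↔
      ∀ c ≠ c₀, Tendsto (fun k => (A - lam c • G) ^ k) atTop (𝓝 0) := by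
  have hP := one_kronecker_sub_kronecker_pow_mul_apply hV hL A G
  set M := (1 : Matrix ι ι ℝ) ⊗ₖ A - L ⊗ₖ G
  set W := V ⊗ₖ (1 : Matrix κ κ ℝ)
  have hWWt : W * Wᵀ = 1 := by
    rw [← kroneckerMap_transpose, ← mul_kronecker_mul, mul_eq_one_comm.mp hV, transpose_one,
      Matrix.one_mul, one_kronecker_one]
  have hM (k : ℕ) (x : ι × κ → ℝ) : M ^ k *ᵥ x = (M ^ k * W) *ᵥ (Wᵀ *ᵥ x) := by
    rw [mulVec_mulVec, Matrix.mul_assoc, hWWt, Matrix.mul_one]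
  constructor
  · intro hcons c hc
    obtain ⟨a, b, hab⟩ := exists_apply_ne_of_mulVec_one_eq_zero hV hL hL1 (hlam c hc)
    refine tendsto_pi_nhds.mpr fun l => tendsto_pi_nhds.mpr fun m => ?_
    -- the initial state `W e_(c,m)` excites the mode `c` alone
    have h := hcons (W *ᵥ Pi.single (c, m) 1) a b l
    simp only [mulVec_mulVec] at h
    simp only [mulVec_single_one, col_apply, hP, ← sub_mul] at h
    simpa [hab, sub_eq_zero] using h.const_mul (V a c - V b c)⁻¹
  · intro hstab x i j l
    simp_rw [hM]
    generalize Wᵀ *ᵥ x = y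
    simp only [mulVec, dotProduct, ← Finset.sum_sub_distrib, ← sub_mul, Fintype.sum_prod_type, hP]
    have hterm (c : ι) (m : κ) :
        Tendsto (fun k => (V i c - V j c) * ((A - lam c • G) ^ k) l m * y (c, m)) atTop (𝓝 0) := by
      by_cases hc : c = c₀
      · simp [hc, apply_eq_apply_of_mulVec_one_eq_zero hV hL hL1 hlam i j]
      · simpa using (((tendsto_pi_nhds.mp (tendsto_pi_nhds.mp (hstab c hc) l) m).const_mul
          (V i c - V j c)).mul_const (y (c, m)))
    simpa using tendsto_finsetSum _ fun c _ => tendsto_finsetSum _ fun m _ => hterm c m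

theorem pow_mul_eq_pow_mul_zero_of_mul_succ_eq {R : Type*} [CommRing R] {n : ℕ} {t w : R}
    {v : Fin (n + 1) → R} (h : ∀ i : Fin n, t * v i.succ = w * v i.castSucc) (j : Fin (n + 1)) :
    t ^ (j : ℕ) * v j = w ^ (j : ℕ) * v 0 := by
  induction j using Fin.induction with
  | zero => simp
  | succ i ih =>
    rw [Fin.val_castSucc] at ih
    rw [Fin.val_succ]
    linear_combination t ^ (i : ℕ) * h i + w * ih

noncomputable def Hmat (n : ℕ) (τ μ : ℝ) (K : Matrix (Fin 1) (Fin n) ℝ) :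
    Matrix (Fin n) (Fin n) ℝ :=
  Amat n τ - μ • (Bmat n τ * K)

noncomputable def Rpoly (n : ℕ) (τ μ : ℝ) (K : Matrix (Fin 1) (Fin n) ℝ) (z : ℂ) : ℂ :=
  (z - 1) ^ n + (μ : ℂ) * ∑ p : Fin n, (τ : ℂ) ^ ((p : ℕ) + 1) *
    ((K 0 ⟨n - 1 - (p : ℕ), by have := p.isLt; omega⟩ : ℝ) : ℂ) * (z - 1) ^ (n - 1 - (p : ℕ))

/-- The solution of `τ v (i + 1) = (z - 1) v i` normalised by `v 0 = τ ^ n`, so that no division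
occurs. -/
noncomputable def hmatEigenvector (n : ℕ) (τ : ℝ) (z : ℂ) : Fin (n + 1) → ℂ :=
  fun j => (z - 1) ^ (j : ℕ) * (τ : ℂ) ^ (n - j)

section Hmat

variable {n : ℕ} {τ μ : ℝ} {K : Matrix (Fin 1) (Fin (n + 1)) ℝ}

theorem Hmat_mulVec_castSucc (v : Fin (n + 1) → ℂ) (i : Fin n) :
    ((Hmat (n + 1) τ μ K).map Complex.ofReal *ᵥ v) i.castSucc = v i.castSucc + τ * v i.succ := by
  have hrow (x : Fin (n + 1)) : (Hmat (n + 1) τ μ K i.castSucc x : ℂ) =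
      (if i.castSucc = x then 1 else 0) + if i.succ = x then (τ : ℂ) else 0 := by
    simp only [Hmat, Amat, Bmat, Matrix.sub_apply, Matrix.smul_apply, mul_apply, of_apply,
      Fin.sum_univ_one, Fin.ext_iff, Fin.val_castSucc, Fin.val_succ]
    split_ifs <;> first | omega | simp
  simp [mulVec, dotProduct, hrow, add_mul, Finset.sum_add_distrib, ite_mul]

theorem Hmat_mulVec_last (v : Fin (n + 1) → ℂ) :
    ((Hmat (n + 1) τ μ K).map Complex.ofReal *ᵥ v) (Fin.last n) =
      v (Fin.last n) - μ * τ * ∑ j, K 0 j * v j := by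
  have hrow (x : Fin (n + 1)) : (Hmat (n + 1) τ μ K (Fin.last n) x : ℂ) =
      (if Fin.last n = x then 1 else 0) - μ * τ * K 0 x := by
    simp only [Hmat, Amat, Bmat, Matrix.sub_apply, Matrix.smul_apply, mul_apply, of_apply,
      Fin.sum_univ_one, Fin.ext_iff, Fin.val_last]
    split_ifs <;> first | omega | simp [mul_assoc]
  simp [mulVec, dotProduct, hrow, sub_mul, Finset.sum_sub_distrib, Finset.mul_sum, mul_assoc,
    ite_mul]

theorem Hmat_mulVec_eq_smul_iff (v : Fin (n + 1) → ℂ) (z : ℂ) :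
    (Hmat (n + 1) τ μ K).map Complex.ofReal *ᵥ v = z • v ↔
      (∀ i : Fin n, (τ : ℂ) * v i.succ = (z - 1) * v i.castSucc) ∧
        (z - 1) * v (Fin.last n) + μ * τ * ∑ j, K 0 j * v j = 0 := by
  rw [funext_iff, Fin.forall_fin_succ']
  simp only [Hmat_mulVec_castSucc, Hmat_mulVec_last, Pi.smul_apply, smul_eq_mul]
  refine and_congr (forall_congr' fun i => ⟨fun h => ?_, fun h => ?_⟩) ⟨fun h => ?_, fun h => ?_⟩
  all_goals first | linear_combination h | linear_combination -h

theorem last_row_hmatEigenvector_eq_Rpoly (z : ℂ) :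
    (z - 1) * hmatEigenvector n τ z (Fin.last n) +
        μ * τ * ∑ j, K 0 j * hmatEigenvector n τ z j = Rpoly (n + 1) τ μ K z := by
  rw [Rpoly, ← Equiv.sum_comp Fin.revPerm, Finset.mul_sum, Finset.mul_sum]
  simp only [hmatEigenvector, Fin.val_last, Nat.sub_self, pow_zero, mul_one]
  congr 1
  · ring
  refine Finset.sum_congr rfl fun p _ => ?_
  have hrev : Fin.revPerm p = ⟨n + 1 - 1 - p, by omega⟩ := Fin.ext (by simp)
  simp only [hrev, Fin.val_mk, show n - (n + 1 - 1 - p) = p by omega]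
  ring

theorem mem_spectrum_Hmat_succ_iff (hτ : τ ≠ 0) (z : ℂ) :
    z ∈ spectrum ℂ ((Hmat (n + 1) τ μ K).map Complex.ofReal) ↔ Rpoly (n + 1) τ μ K z = 0 := by
  have hτ' : (τ : ℂ) ≠ 0 := by exact_mod_cast hτ
  rw [mem_spectrum_iff_exists_mulVec_eq_smul, ← last_row_hmatEigenvector_eq_Rpoly]
  simp_rw [Hmat_mulVec_eq_smul_iff]
  set u := hmatEigenvector n τ z
  constructor
  · rintro ⟨v, hv0, hrec, hlast⟩
    have hvu (j : Fin (n + 1)) : (τ : ℂ) ^ n * v j = v 0 * u j := by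
      rw [show (τ : ℂ) ^ n = τ ^ (n - j) * τ ^ (j : ℕ) by rw [← pow_add]; congr 1; omega,
        mul_assoc, pow_mul_eq_pow_mul_zero_of_mul_succ_eq hrec]
      simp only [u, hmatEigenvector]
      ring
    have hv00 : v 0 ≠ 0 := by
      intro h0
      refine hv0 (funext fun j => ?_)
      simpa [h0, hτ'] using hvu j
    have hsum : (τ : ℂ) ^ n * ∑ j, K 0 j * v j = v 0 * ∑ j, K 0 j * u j := by
      rw [Finset.mul_sum, Finset.mul_sum]
      exact Finset.sum_congr rfl fun j _ => by linear_combination (K 0 j : ℂ) * hvu j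
    refine (mul_eq_zero.mp ?_).resolve_left hv00
    linear_combination (τ : ℂ) ^ n * hlast - (z - 1) * hvu (Fin.last n) - μ * τ * hsum
  · intro hR
    refine ⟨u, fun h => ?_, fun i => ?_, hR⟩
    · simpa [u, hmatEigenvector, hτ'] using congrFun h 0
    · simp only [u, hmatEigenvector, Fin.val_succ, Fin.val_castSucc]
      rw [show n - i = n - (i + 1) + 1 by omega]
      ring

end Hmat

theorem mem_spectrum_Hmat_iff {n : ℕ} {τ μ : ℝ} {K : Matrix (Fin 1) (Fin n) ℝ} (hτ : τ ≠ 0)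
    (z : ℂ) : z ∈ spectrum ℂ ((Hmat n τ μ K).map Complex.ofReal) ↔ Rpoly n τ μ K z = 0 := by
  cases n with
  | zero => simp [Rpoly]
  | succ n => exact mem_spectrum_Hmat_succ_iff hτ z

/-- consensus is reached asymptotically iff for every `i = 2,…,N`, every
complex root `z` of `R_i(z,K) = (z−1)^n + λ_i ∑_{p=1}^n τ^p K_{n+1−p} (z−1)^{n−p}`
satisfies `|z| < 1`.  (The sum is reindexed by `p' = p−1 : Fin n`; the 1-based gain
`K_{n+1-p}` is the 0-based entry `K 0 ⟨n-1-p'⟩`.) -/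
theorem stmt_5 (n : ℕ) (τ : ℝ) (hτ : 0 < τ)
    (N : ℕ) (hN : 2 ≤ N) (L : Matrix (Fin N) (Fin N) ℝ)
    (lam : Fin N → ℝ)
    (hlampos : ∀ i : Fin N, i ≠ ⟨0, by omega⟩ → 0 < lam i)
    (hL1 : L *ᵥ (fun _ => (1 : ℝ)) = 0)
    (hdiag : ∃ V : Matrix (Fin N) (Fin N) ℝ, Vᵀ * V = 1 ∧ L = V * Matrix.diagonal lam * Vᵀ)
    (K : Matrix (Fin 1) (Fin n) ℝ) :
    (∀ x0 : Fin N × Fin n → ℝ, ∀ i j : Fin N, ∀ l : Fin n,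
        Tendsto (fun k : ℕ =>
            ((((1 : Matrix (Fin N) (Fin N) ℝ) ⊗ₖ Amat n τ - L ⊗ₖ (Bmat n τ * K)) ^ k) *ᵥ x0) (i, l)
          - ((((1 : Matrix (Fin N) (Fin N) ℝ) ⊗ₖ Amat n τ - L ⊗ₖ (Bmat n τ * K)) ^ k) *ᵥ x0) (j, l))
          atTop (nhds 0))
    ↔ (∀ i : Fin N, i ≠ ⟨0, by omega⟩ → ∀ z : ℂ,
        (z - 1) ^ n + ((lam i : ℝ) : ℂ) *
            ∑ p : Fin n, (τ : ℂ) ^ ((p : ℕ) + 1) *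
              ((K 0 ⟨n - 1 - (p : ℕ), by have := p.isLt; omega⟩ : ℝ) : ℂ) *
              (z - 1) ^ (n - 1 - (p : ℕ)) = 0
        → ‖z‖ < 1) := by
  obtain ⟨V, hV, hL⟩ := hdiag
  rw [consensus_iff_tendsto_pow_zero hV hL hL1 fun c hc => (hlampos c hc).ne']
  refine forall₂_congr fun c _ => ?_
  rw [← tendsto_pow_map_ofReal_iff, Matrix.tendsto_pow_atTop_nhds_zero_iff_spectrum_norm_lt_one]
  exact forall_congr' fun z => imp_congr_left (mem_spectrum_Hmat_iff hτ.ne' z)
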